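/- arXiv:2112.09353 — 4 statements merged into one kernel-verified Lean document; each statement's English description precedes it below -/
import Mathlib

section
/- Let H ∈ ℝ and let f be a differentiable function on an interval I ⊂ (0,∞) on which sn_H > 0, satisfying the Riccati inequality f' ≤ -H - f². Let f_H = sn_H'/sn_H. Then the function s ↦ sn_H(s)²·(f(s) - f_H(s)) is non-increasing on I. -/
noncomputable def snH (H r : ℝ) : ℝ :=
  if 0 < H then Real.sin (Real.sqrt H * r) / Real.sqrt H
  else if H = 0 then r
  else Real.sinh (Real.sqrt (-H) * r) / Real.sqrt (-H)

noncomputable def snH' (H r : ℝ) : ℝ :=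
  if 0 < H then Real.cos (Real.sqrt H * r)
  else if H = 0 then 1
  else Real.cosh (Real.sqrt (-H) * r)

lemma snH_hasDeriv (H r : ℝ) : HasDerivAt (snH H) (snH' H r) r := by
  rcases lt_trichotomy 0 H with h | h | h
  · have hs : Real.sqrt H ≠ 0 := ne_of_gt (Real.sqrt_pos.mpr h)
    have h1 : HasDerivAt (fun x : ℝ => Real.sqrt H * x) (Real.sqrt H) r := by
      simpa using (hasDerivAt_id r).const_mul (Real.sqrt H)
    have h2 := ((Real.hasDerivAt_sin (Real.sqrt H * r)).comp r h1).div_const (Real.sqrt H)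
    have heq : snH H = fun x => Real.sin (Real.sqrt H * x) / Real.sqrt H := by
      funext x; simp [snH, h]
    rw [heq]
    refine HasDerivAt.congr_deriv h2 ?_
    simp [snH', h]
    field_simp
  · subst h
    have heq : snH 0 = fun x : ℝ => x := by funext x; simp [snH]
    rw [heq]
    simpa [snH'] using hasDerivAt_id' r
  · have hH : ¬ 0 < H := by linarith
    have hne : H ≠ 0 := by linarith
    have hs : Real.sqrt (-H) ≠ 0 := ne_of_gt (Real.sqrt_pos.mpr (by linarith))
    have h1 : HasDerivAt (fun x : ℝ => Real.sqrt (-H) * x) (Real.sqrt (-H)) r := by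
      simpa using (hasDerivAt_id r).const_mul (Real.sqrt (-H))
    have h2 := ((Real.hasDerivAt_sinh (Real.sqrt (-H) * r)).comp r h1).div_const (Real.sqrt (-H))
    have heq : snH H = fun x => Real.sinh (Real.sqrt (-H) * x) / Real.sqrt (-H) := by
      funext x; simp [snH, hH, hne]
    rw [heq]
    refine HasDerivAt.congr_deriv h2 ?_
    simp [snH', hH, hne]
    field_simp

lemma snH'_hasDeriv (H r : ℝ) : HasDerivAt (snH' H) (-H * snH H r) r := by
  rcases lt_trichotomy 0 H with h | h | h
  · have hsq : Real.sqrt H * Real.sqrt H = H := Real.mul_self_sqrt h.le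
    have h1 : HasDerivAt (fun x : ℝ => Real.sqrt H * x) (Real.sqrt H) r := by
      simpa using (hasDerivAt_id r).const_mul (Real.sqrt H)
    have h2 := (Real.hasDerivAt_cos (Real.sqrt H * r)).comp r h1
    have heq : snH' H = fun x => Real.cos (Real.sqrt H * x) := by
      funext x; simp [snH', h]
    rw [heq]
    refine HasDerivAt.congr_deriv h2 ?_
    have hs : Real.sqrt H ≠ 0 := ne_of_gt (Real.sqrt_pos.mpr h)
    simp [snH, h]
    field_simp
    linear_combination 1 * Real.sin (Real.sqrt H * r) * hsq
  · subst h
    have heq : snH' 0 = fun _ : ℝ => (1:ℝ) := by funext x; simp [snH']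
    rw [heq]
    simpa using hasDerivAt_const r (1:ℝ)
  · have hH : ¬ 0 < H := by linarith
    have hne : H ≠ 0 := by linarith
    have hsq : Real.sqrt (-H) * Real.sqrt (-H) = -H := Real.mul_self_sqrt (by linarith)
    have hs : Real.sqrt (-H) ≠ 0 := ne_of_gt (Real.sqrt_pos.mpr (by linarith))
    have h1 : HasDerivAt (fun x : ℝ => Real.sqrt (-H) * x) (Real.sqrt (-H)) r := by
      simpa using (hasDerivAt_id r).const_mul (Real.sqrt (-H))
    have h2 := (Real.hasDerivAt_cosh (Real.sqrt (-H) * r)).comp r h1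
    have heq : snH' H = fun x => Real.cosh (Real.sqrt (-H) * x) := by
      funext x; simp [snH', hH, hne]
    rw [heq]
    refine HasDerivAt.congr_deriv h2 ?_
    simp [snH, hH, hne]
    field_simp
    linear_combination 1 * Real.sinh (Real.sqrt (-H) * r) * hsq

/-- If `f' ≤ -H - f²` on an interval `I ⊆ (0,∞)` where `sn_H > 0`, then
`s ↦ sn_H(s)² (f(s) - f_H(s))` is non-increasing on `I`, where `f_H = sn_H'/sn_H`. -/
theorem stmt1 (H : ℝ) (I : Set ℝ) (hI : I ⊆ Set.Ioi (0:ℝ)) (hconn : I.OrdConnected)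
    (f f' : ℝ → ℝ) (hderiv : ∀ s ∈ I, HasDerivAt f (f' s) s)
    (hsn : ∀ s ∈ I, 0 < snH H s)
    (hric : ∀ s ∈ I, f' s ≤ -H - (f s) ^ 2) :
    AntitoneOn (fun s => (snH H s) ^ 2 * (f s - snH' H s / snH H s)) I := by
  set g : ℝ → ℝ := fun s => snH H s ^ 2 * f s - snH H s * snH' H s with hg
  set D : ℝ → ℝ := fun s =>
    (2 * snH H s ^ 1 * snH' H s * f s + snH H s ^ 2 * f' s)
      - (snH' H s * snH' H s + snH H s * (-H * snH H s)) with hD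
  have hgderiv : ∀ s ∈ I, HasDerivAt g (D s) s := by
    intro s hs
    exact (((snH_hasDeriv H s).pow 2).mul (hderiv s hs)).sub
      ((snH_hasDeriv H s).mul (snH'_hasDeriv H s))
  have hconv : Convex ℝ I := hconn.convex
  have hganti : AntitoneOn g I := by
    apply antitoneOn_of_deriv_nonpos hconv
    · intro s hs
      exact (hgderiv s hs).continuousAt.continuousWithinAt
    · intro s hs
      exact (hgderiv s (interior_subset hs)).differentiableAt.differentiableWithinAt
    · intro s hs
      have hsI : s ∈ I := interior_subset hs
      rw [(hgderiv s hsI).deriv]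
      have h1 := hric s hsI
      have h2 := sq_nonneg (snH H s)
      have h3 := sq_nonneg (snH H s * f s - snH' H s)
      have h4 : snH H s ^ 2 * f' s ≤ snH H s ^ 2 * (-H - f s ^ 2) :=
        mul_le_mul_of_nonneg_left h1 h2
      simp only [hD]
      nlinarith [h3, h4]
  intro a ha b hb hab
  have hEq : ∀ s ∈ I, snH H s ^ 2 * (f s - snH' H s / snH H s) = g s := by
    intro s hs
    have hne : snH H s ≠ 0 := ne_of_gt (hsn s hs)
    field_simp [hg]
    ring
  simp only [hEq a ha, hEq b hb]
  exact hganti ha hb hab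
end

section
/- Let v, V : [a,b] → (0,∞) with v measurable and V continuous, and suppose the 'relative volume comparison' holds: for all a ≤ r₁ ≤ r₂ ≤ b, v(r₂)/V(r₂) ≤ v(r₁)/V(r₁), and moreover ∫_a^b v(r)dr ≥ (1-ε)·v(a)/V(a)·∫_a^b V(r)dr for some ε ∈ [0,1). Then for every d ∈ (a,b): v(d)/v(a) ≥ (1 - ε·(∫_a^b V)/(∫_d^b V))·V(d)/V(a). -/
/-- Quantitative sphere comparison: if `v/V` is non-increasing and
`∫_a^b v ≥ (1-ε)·(v(a)/V(a))·∫_a^b V`, then for `d ∈ (a,b)`,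
`v(d)/v(a) ≥ (1 - ε·(∫_a^b V)/(∫_d^b V))·V(d)/V(a)`. -/
theorem stmt7 (a b ε : ℝ) (hab : a < b) (hε : ε ∈ Set.Ico (0:ℝ) 1)
    (v V : ℝ → ℝ) (hv : ∀ r ∈ Set.Icc a b, 0 < v r) (hV : ∀ r ∈ Set.Icc a b, 0 < V r)
    (hVc : ContinuousOn V (Set.Icc a b)) (hvm : Measurable v)
    (hmono : ∀ r₁ ∈ Set.Icc a b, ∀ r₂ ∈ Set.Icc a b, r₁ ≤ r₂ →
      v r₂ / V r₂ ≤ v r₁ / V r₁)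
    (hint : IntervalIntegrable v MeasureTheory.volume a b)
    (hvol : (∫ r in a..b, v r) ≥ (1 - ε) * (v a / V a) * ∫ r in a..b, V r) :
    ∀ d ∈ Set.Ioo a b,
      v d / v a ≥ (1 - ε * (∫ r in a..b, V r) / ∫ r in d..b, V r) * (V d / V a) := by
  intro d hd
  obtain ⟨had, hdb⟩ := hd
  have hdmem : d ∈ Set.Icc a b := ⟨had.le, hdb.le⟩
  have hamem : a ∈ Set.Icc a b := ⟨le_rfl, hab.le⟩
  have hVa := hV a hamem
  have hva := hv a hamem
  have hVd := hV d hdmem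
  have hvd := hv d hdmem
  have hVint : IntervalIntegrable V MeasureTheory.volume a b := by
    apply ContinuousOn.intervalIntegrable
    rwa [Set.uIcc_of_le hab.le]
  have hsub1 : Set.uIcc a d ⊆ Set.uIcc a b := by
    rw [Set.uIcc_of_le had.le, Set.uIcc_of_le hab.le]
    exact Set.Icc_subset_Icc le_rfl hdb.le
  have hsub2 : Set.uIcc d b ⊆ Set.uIcc a b := by
    rw [Set.uIcc_of_le hdb.le, Set.uIcc_of_le hab.le]
    exact Set.Icc_subset_Icc had.le le_rfl
  have hvad : IntervalIntegrable v MeasureTheory.volume a d := hint.mono_set hsub1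
  have hvdb : IntervalIntegrable v MeasureTheory.volume d b := hint.mono_set hsub2
  have hVad : IntervalIntegrable V MeasureTheory.volume a d := hVint.mono_set hsub1
  have hVdb : IntervalIntegrable V MeasureTheory.volume d b := hVint.mono_set hsub2
  set I := ∫ r in a..b, V r with hI
  set Iad := ∫ r in a..d, V r with hIad
  set Idb := ∫ r in d..b, V r with hIdb
  have hsplit : Iad + Idb = I :=
    intervalIntegral.integral_add_adjacent_intervals hVad hVdb
  have hIdbpos : 0 < Idb := by
    apply intervalIntegral.intervalIntegral_pos_of_pos_on hVdb
    · intro x hx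
      exact hV x ⟨had.le.trans hx.1.le, hx.2.le⟩
    · exact hdb
  -- pointwise bounds
  have h1 : (∫ r in a..d, v r) ≤ (v a / V a) * Iad := by
    rw [hIad, ← intervalIntegral.integral_const_mul]
    apply intervalIntegral.integral_mono_on had.le hvad (hVad.const_mul _)
    intro x hx
    have hxm : x ∈ Set.Icc a b := ⟨hx.1, hx.2.trans hdb.le⟩
    exact (div_le_iff₀ (hV x hxm)).mp (hmono a hamem x hxm hx.1)
  have h2 : (∫ r in d..b, v r) ≤ (v d / V d) * Idb := by
    rw [hIdb, ← intervalIntegral.integral_const_mul]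
    apply intervalIntegral.integral_mono_on hdb.le hvdb (hVdb.const_mul _)
    intro x hx
    have hxm : x ∈ Set.Icc a b := ⟨had.le.trans hx.1, hx.2⟩
    exact (div_le_iff₀ (hV x hxm)).mp (hmono d hdmem x hxm hx.1)
  have hsplitv : (∫ r in a..d, v r) + (∫ r in d..b, v r) = ∫ r in a..b, v r :=
    intervalIntegral.integral_add_adjacent_intervals hvad hvdb
  have key : (1 - ε) * (v a / V a) * I ≤ (v a / V a) * Iad + (v d / V d) * Idb := by
    calc (1 - ε) * (v a / V a) * I ≤ ∫ r in a..b, v r := hvol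
    _ = (∫ r in a..d, v r) + (∫ r in d..b, v r) := hsplitv.symm
    _ ≤ (v a / V a) * Iad + (v d / V d) * Idb := add_le_add h1 h2
  have key' : (1 - ε) * v a * I * V d ≤ v a * V d * Iad + v d * V a * Idb := by
    have := mul_le_mul_of_nonneg_right key (mul_pos hVa hVd).le
    calc (1 - ε) * v a * I * V d = (1 - ε) * (v a / V a) * I * (V a * V d) := by
            field_simp
    _ ≤ ((v a / V a) * Iad + (v d / V d) * Idb) * (V a * V d) := this
    _ = v a * V d * Iad + v d * V a * Idb := by field_simp
  rw [ge_iff_le]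
  have hrw : (1 - ε * I / Idb) * (V d / V a) = ((Idb - ε * I) * V d) / (Idb * V a) := by
    field_simp
  rw [hrw, div_le_div_iff₀ (by positivity) hva]
  have hprod : v a * V d * Iad = v a * V d * (I - Idb) := by
    rw [show Iad = I - Idb from by linarith]
  nlinarith [key', hprod]
end

section
/- Let (X,d) be a metric space and u : X → ℝ a 1-Lipschitz function. For t ∈ ℝ, define the c-transform (tu)^c(y) = inf_{x∈X} (d(x,y)²/2 - t·u(x)). Then for all y ∈ X, (tu)^c(y) ≥ -t·u(y) - t²/2. Moreover, if there exists a point z ∈ X with u(z) - u(y) = sign(t)·d(y,z) and d(y,z) = |t|, then (tu)^c(y) = -t·u(y) - t²/2. -/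
/-!
Since `u` is 1-Lipschitz, `t (u x - u y) ≤ |t| d(x,y) ≤ d(x,y)²/2 + t²/2`, which is the lower bound
term by term. A point `z` at distance `|t|` from `y` along which `u` changes by exactly
`sign t · |t| = t` makes both inequalities equalities, so the infimum is attained at `z`.
-/

theorem Real.sign_mul_abs (r : ℝ) : Real.sign r * |r| = r := by
  rcases lt_trichotomy r 0 with hr | rfl | hr
  · rw [Real.sign_of_neg hr, abs_of_neg hr]; ring
  · simp
  · rw [Real.sign_of_pos hr, abs_of_pos hr]; ring

section CTransform

variable {X : Type*} [PseudoMetricSpace X] {u : X → ℝ}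

theorem LipschitzWith.mul_sub_le_abs_mul_dist (hu : LipschitzWith 1 u) (t : ℝ) (x y : X) :
    t * (u x - u y) ≤ |t| * dist x y :=
  calc t * (u x - u y) ≤ |t| * |u x - u y| := (le_abs_self _).trans (abs_mul _ _).le
    _ ≤ |t| * dist x y := by
      gcongr
      simpa [Real.dist_eq] using hu.dist_le_mul x y

theorem LipschitzWith.le_cost_sub_mul (hu : LipschitzWith 1 u) (t : ℝ) (x y : X) :
    -t * u y - t ^ 2 / 2 ≤ dist x y ^ 2 / 2 - t * u x := by
  have hlip := hu.mul_sub_le_abs_mul_dist t x y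
  nlinarith [sq_nonneg (dist x y - |t|), sq_abs t]

theorem cost_sub_mul_eq_of_dist_eq_abs (t : ℝ) {y z : X}
    (hu : u z - u y = Real.sign t * dist y z) (hd : dist y z = |t|) :
    dist z y ^ 2 / 2 - t * u z = -t * u y - t ^ 2 / 2 := by
  rw [hd, Real.sign_mul_abs] at hu
  rw [dist_comm, hd, sq_abs, show u z = u y + t by linarith]
  ring

end CTransform

/-- For a 1-Lipschitz `u`, the c-transform `(tu)^c(y) = inf_x (d(x,y)²/2 - t·u(x))`
satisfies `(tu)^c(y) ≥ -t·u(y) - t²/2`, with equality if there is a point `z` with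
`u(z) - u(y) = sign(t)·d(y,z)` and `d(y,z) = |t|`. -/
theorem stmt9 {X : Type*} [MetricSpace X] (u : X → ℝ) (hu : LipschitzWith 1 u)
    (t : ℝ) (y : X) :
    (⨅ x : X, (dist x y ^ 2 / 2 - t * u x)) ≥ -t * u y - t ^ 2 / 2 ∧
    ((∃ z : X, u z - u y = Real.sign t * dist y z ∧ dist y z = |t|) →
      (⨅ x : X, (dist x y ^ 2 / 2 - t * u x)) = -t * u y - t ^ 2 / 2) := by
  have : Nonempty X := ⟨y⟩
  have hlower := le_ciInf fun x => hu.le_cost_sub_mul t x y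
  refine ⟨hlower, fun ⟨z, hzu, hzd⟩ => le_antisymm ?_ hlower⟩
  rw [← cost_sub_mul_eq_of_dist_eq_abs t hzu hzd]
  exact ciInf_le ⟨_, Set.forall_mem_range.2 fun x => hu.le_cost_sub_mul t x y⟩ z
end

section
/- Let a < b, ε ∈ [0,1), and let v : [a,b] → (0,∞) be non-increasing with ∫_a^b v ≥ (1-ε)(b-a)v(a). Then for every d ∈ (a,b): (v(d) - v(a))/((d-a)·v(a)) ≥ -ε·(b-a)/((b-d)·(d-a)). -/
/-- Averaged Laplacian lower bound, model case `V ≡ 1`: if `v` is non-increasing on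
`[a,b]` and `∫_a^b v ≥ (1-ε)(b-a)v(a)`, then for `d ∈ (a,b)`,
`(v(d) - v(a))/((d-a)v(a)) ≥ -ε(b-a)/((b-d)(d-a))`. -/
theorem stmt19 (a b ε : ℝ) (hab : a < b) (hε : ε ∈ Set.Ico (0:ℝ) 1)
    (v : ℝ → ℝ) (hv : ∀ r ∈ Set.Icc a b, 0 < v r)
    (hmono : AntitoneOn v (Set.Icc a b))
    (hint : IntervalIntegrable v MeasureTheory.volume a b)
    (hvol : (∫ r in a..b, v r) ≥ (1 - ε) * (b - a) * v a) :
    ∀ d ∈ Set.Ioo a b,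
      (v d - v a) / ((d - a) * v a) ≥ -ε * (b - a) / ((b - d) * (d - a)) := by
  intro d hd
  obtain ⟨had, hdb⟩ := hd
  have hda : (0:ℝ) < d - a := by linarith
  have hbd : (0:ℝ) < b - d := by linarith
  have hva : 0 < v a := hv a ⟨le_refl a, hab.le⟩
  have hdI : d ∈ Set.Icc a b := ⟨had.le, hdb.le⟩
  have hint1 : IntervalIntegrable v MeasureTheory.volume a d :=
    hint.mono_set (by rw [Set.uIcc_of_le had.le, Set.uIcc_of_le hab.le]
                      exact Set.Icc_subset_Icc le_rfl hdb.le)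
  have hint2 : IntervalIntegrable v MeasureTheory.volume d b :=
    hint.mono_set (by rw [Set.uIcc_of_le hdb.le, Set.uIcc_of_le hab.le]
                      exact Set.Icc_subset_Icc had.le le_rfl)
  have h1 : (∫ r in a..d, v r) ≤ (d - a) * v a := by
    have := intervalIntegral.integral_mono_on had.le hint1
      (intervalIntegrable_const (c := v a))
      (fun x hx => hmono ⟨le_refl a, hab.le⟩ ⟨hx.1, hx.2.trans hdb.le⟩ hx.1)
    simpa using this
  have h2 : (∫ r in d..b, v r) ≤ (b - d) * v d := by
    have := intervalIntegral.integral_mono_on hdb.le hint2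
      (intervalIntegrable_const (c := v d))
      (fun x hx => hmono hdI ⟨had.le.trans hx.1, hx.2⟩ hx.1)
    simpa using this
  have hsplit : (∫ r in a..d, v r) + (∫ r in d..b, v r) = ∫ r in a..b, v r :=
    intervalIntegral.integral_add_adjacent_intervals hint1 hint2
  have key : (1 - ε) * (b - a) * v a ≤ (d - a) * v a + (b - d) * v d := by
    linarith [hvol, hsplit, h1, h2]
  rw [ge_iff_le, div_le_div_iff₀ (by positivity) (by positivity)]
  nlinarith [mul_le_mul_of_nonneg_left key hda.le]
end
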